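/- arXiv:cs/0003021 — 2 statements merged into one kernel-verified Lean document; each statement's English description precedes it below -/
import Mathlib

section
/- For every set Σ of propositional variables, every belief sequence σ and every level k, the set of answered queries with smallest language Σ is consistent: {α : L_α = Σ} ∩ C_k(σ) ⊬ ⊥ (this set of formulas is jointly satisfiable). In particular, for no formula γ do both σ ⊢_k γ and σ ⊢_k ¬γ hold. -/
namespace BeliefSeq

/-- Propositional formulas over a type `ν` of propositional variables,
with connectives ¬, ∧, ∨, →, ↔ and constants true, false. -/
inductive PropForm (ν : Type) : Type where
  | var : ν → PropForm ν
  | tru : PropForm ν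
  | fls : PropForm ν
  | neg : PropForm ν → PropForm ν
  | conj : PropForm ν → PropForm ν → PropForm ν
  | disj : PropForm ν → PropForm ν → PropForm ν
  | impl : PropForm ν → PropForm ν → PropForm ν
  | biim : PropForm ν → PropForm ν → PropForm ν

namespace PropForm

variable {ν : Type}

/-- Classical (two-valued) evaluation of a formula under a valuation. -/
def eval (v : ν → Bool) : PropForm ν → Bool
  | var x => v x
  | tru => true
  | fls => false
  | neg φ => !(φ.eval v)
  | conj φ ψ => φ.eval v && ψ.eval v
  | disj φ ψ => φ.eval v || ψ.eval v
  | impl φ ψ => !(φ.eval v) || ψ.eval v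
  | biim φ ψ => φ.eval v == ψ.eval v

/-- The set `L(α)` of variables occurring syntactically in a formula. -/
def vars : PropForm ν → Set ν
  | var x => {x}
  | tru => ∅
  | fls => ∅
  | neg φ => φ.vars
  | conj φ ψ => φ.vars ∪ ψ.vars
  | disj φ ψ => φ.vars ∪ ψ.vars
  | impl φ ψ => φ.vars ∪ ψ.vars
  | biim φ ψ => φ.vars ∪ ψ.vars

end PropForm

variable {ν : Type}

/-- `α ⇔ β` : logical equivalence (α ↔ β is a tautology). -/
def Equiv (α β : PropForm ν) : Prop := ∀ v, α.eval v = β.eval v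

def Tautology (α : PropForm ν) : Prop := ∀ v, α.eval v = true

def Contradiction (α : PropForm ν) : Prop := ∀ v, α.eval v = false

/-- Classical consequence `Γ ⊢ γ`. -/
def Entails (Γ : Set (PropForm ν)) (γ : PropForm ν) : Prop :=
  ∀ v, (∀ φ ∈ Γ, φ.eval v = true) → γ.eval v = true

/-- Consistency (satisfiability) of a set of formulas. -/
def Satisfiable (Γ : Set (PropForm ν)) : Prop :=
  ∃ v, ∀ φ ∈ Γ, φ.eval v = true

/-- `V` expresses `α`: α is logically equivalent to some formula
all of whose variables lie in `V`. -/
def Expresses (V : Set ν) (α : PropForm ν) : Prop :=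
  ∃ β : PropForm ν, Equiv α β ∧ β.vars ⊆ V

/-- `L_α` : the smallest language of `α` (intersection of all sets of
variables expressing `α`). -/
def Lang (α : PropForm ν) : Set ν := ⋂₀ {V : Set ν | Expresses V α}

/-- Direct relevance (`0`-relevance): logical language overlap `L_α ∩ L_β ≠ ∅`. -/
def DirectRel (α β : PropForm ν) : Prop := (Lang α ∩ Lang β).Nonempty

/-- `k`-relevance of `α`, `β` w.r.t. the belief sequence `σ`:
there is a chain `χ_1, …, χ_k` of formulas of `σ` with
`α, χ₁` directly relevant, each `χ_i, χ_{i+1}` directly relevant,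
and `χ_k, β` directly relevant (for `k = 0` this is direct relevance). -/
def KRel (k : ℕ) (α β : PropForm ν) (σ : List (PropForm ν)) : Prop :=
  ∃ l : List (PropForm ν), l.length = k ∧ (∀ χ ∈ l, χ ∈ σ) ∧
    List.Chain' DirectRel (α :: (l ++ [β]))

/-- `rel(α,β,σ)` : the least `k` such that `α, β` are `k`-relevant w.r.t. `σ`
(`∞ = ⊤` if they are irrelevant). -/
noncomputable def relDeg (α β : PropForm ν) (σ : List (PropForm ν)) : ℕ∞ :=
  sInf {n : ℕ∞ | ∃ k : ℕ, n = (k : ℕ∞) ∧ KRel k α β σ}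

open Classical in
/-- The priority ordering imposed by the query `γ` on the (indexed) entries of `σ`:
more relevant first; among equally relevant entries, more recent
(larger index) first. -/
noncomputable def priority (γ : PropForm ν) (σ : List (PropForm ν)) :
    (ℕ × PropForm ν) → (ℕ × PropForm ν) → Bool :=
  fun a b =>
    decide (relDeg γ a.2 σ < relDeg γ b.2 σ ∨
      (relDeg γ a.2 σ = relDeg γ b.2 σ ∧ b.1 ≤ a.1))

/-- The entries `δ_1, …, δ_n` of `σ` reordered by the priority above. -/
noncomputable def prioritized (γ : PropForm ν) (σ : List (PropForm ν)) :
    List (PropForm ν) :=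
  ((σ.zipIdx.map Prod.swap).mergeSort (priority γ σ)).map Prod.snd

open Classical in
/-- The prioritized maxiconsistent set `Γ_{⟨σ,k,γ⟩}` : go through `δ_1, …, δ_n`
in priority order, skipping `δ_{i+1}` if `Γ^i ⊢ ¬δ_{i+1}` or `δ_{i+1}` is not
`k`-relevant to `γ` w.r.t. `σ`, and adding it otherwise. -/
noncomputable def Gamma (σ : List (PropForm ν)) (k : ℕ) (γ : PropForm ν) :
    Set (PropForm ν) :=
  (prioritized γ σ).foldl
    (fun Γ δ =>
      if Entails Γ (PropForm.neg δ) ∨ (k : ℕ∞) < relDeg γ δ σ then Γ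
      else insert δ Γ) ∅

/-- `σ ⊢_k γ` iff `Γ_{⟨σ,k,γ⟩} ⊢ γ`. -/
def InferK (σ : List (PropForm ν)) (k : ℕ) (γ : PropForm ν) : Prop :=
  Entails (Gamma σ k γ) γ

/-- `C_k(σ) = {γ | σ ⊢_k γ}`. -/
def Ck (σ : List (PropForm ν)) (k : ℕ) : Set (PropForm ν) :=
  {γ | InferK σ k γ}

/-- Revision `σ * γ` : concatenation of `γ` at the (most recent) end of `σ`. -/
def revise (σ : List (PropForm ν)) (γ : PropForm ν) : List (PropForm ν) :=
  σ ++ [γ]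


/-
The prioritized set `Γ_{σ,k,γ}` depends on the query `γ` only through `L_γ`, since `γ` enters
only through relevance degrees. It is satisfiable, because a formula is added only when the set
built so far does not entail its negation. Hence all answered queries with the same smallest
language are consequences of one satisfiable set; as `¬γ` has the same smallest language as `γ`,
the two are never both answered.
-/

theorem Satisfiable.not_entails_fls {Γ : Set (PropForm ν)} (h : Satisfiable Γ) :
    ¬ Entails Γ PropForm.fls := fun hfls => by
  obtain ⟨v, hv⟩ := h
  simpa [PropForm.eval] using hfls v hv

theorem Satisfiable.of_forall_entails {Γ T : Set (PropForm ν)} (h : Satisfiable Γ)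
    (hT : ∀ φ ∈ T, Entails Γ φ) : Satisfiable T := by
  obtain ⟨v, hv⟩ := h
  exact ⟨v, fun φ hφ => hT φ hφ v hv⟩

theorem Satisfiable.insert_of_not_entails_neg {Γ : Set (PropForm ν)} {δ : PropForm ν}
    (h : ¬ Entails Γ (PropForm.neg δ)) : Satisfiable (insert δ Γ) := by
  simp only [Entails, not_forall] at h
  obtain ⟨v, hv, hδ⟩ := h
  refine ⟨v, Set.forall_mem_insert.2 ⟨?_, hv⟩⟩
  simpa [PropForm.eval] using hδ

open Classical in
theorem Satisfiable.foldl_insert_unless {Γ : Set (PropForm ν)} (h : Satisfiable Γ)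
    (skip : PropForm ν → Prop) [DecidablePred skip] (l : List (PropForm ν)) :
    Satisfiable (l.foldl
      (fun Γ δ => if Entails Γ (PropForm.neg δ) ∨ skip δ then Γ else insert δ Γ) Γ) := by
  induction l generalizing Γ with
  | nil => exact h
  | cons δ l ih =>
    refine ih ?_
    dsimp only
    split_ifs with hskip
    · exact h
    · exact Satisfiable.insert_of_not_entails_neg (not_or.1 hskip).1

theorem satisfiable_Gamma (σ : List (PropForm ν)) (k : ℕ) (γ : PropForm ν) :
    Satisfiable (Gamma σ k γ) :=
  Satisfiable.foldl_insert_unless (Γ := ∅) ⟨fun _ => true, fun _ h => h.elim⟩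
    (fun δ => (k : ℕ∞) < relDeg γ δ σ) _

theorem lang_neg (γ : PropForm ν) : Lang (PropForm.neg γ) = Lang γ := by
  suffices h : ∀ V, Expresses V (PropForm.neg γ) ↔ Expresses V γ by simp only [Lang, h]
  intro V
  constructor
  · rintro ⟨β, hβ, hV⟩
    exact ⟨PropForm.neg β, fun v => by simp [PropForm.eval, ← hβ v], hV⟩
  · rintro ⟨β, hβ, hV⟩
    exact ⟨PropForm.neg β, fun v => by simp [PropForm.eval, hβ v], hV⟩

theorem kRel_iff_of_lang_eq {γ₁ γ₂ : PropForm ν} (h : Lang γ₁ = Lang γ₂)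
    (k : ℕ) (β : PropForm ν) (σ : List (PropForm ν)) :
    KRel k γ₁ β σ ↔ KRel k γ₂ β σ := by
  refine exists_congr fun _ => and_congr_right fun _ => and_congr_right fun _ => ?_
  change List.IsChain _ _ ↔ List.IsChain _ _
  simp only [List.isChain_cons, DirectRel, h]

theorem relDeg_eq_of_lang_eq {γ₁ γ₂ : PropForm ν} (h : Lang γ₁ = Lang γ₂)
    (β : PropForm ν) (σ : List (PropForm ν)) :
    relDeg γ₁ β σ = relDeg γ₂ β σ := by
  simp only [relDeg, kRel_iff_of_lang_eq h]

theorem Gamma_eq_of_lang_eq {γ₁ γ₂ : PropForm ν} (h : Lang γ₁ = Lang γ₂)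
    (σ : List (PropForm ν)) (k : ℕ) : Gamma σ k γ₁ = Gamma σ k γ₂ := by
  have hrel : relDeg γ₁ = relDeg γ₂ := funext fun β => funext (relDeg_eq_of_lang_eq h β)
  unfold Gamma prioritized priority
  rw [hrel]

theorem satisfiable_lang_eq_inter_Ck (S : Set ν) (σ : List (PropForm ν)) (k : ℕ) :
    Satisfiable ({α : PropForm ν | Lang α = S} ∩ Ck σ k) := by
  rcases Set.eq_empty_or_nonempty ({α : PropForm ν | Lang α = S} ∩ Ck σ k) with hT | ⟨α, hαS, -⟩
  · exact ⟨fun _ => true, by simp [hT]⟩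
  refine (satisfiable_Gamma σ k α).of_forall_entails fun φ ⟨hφS, hφ⟩ => ?_
  rwa [← Gamma_eq_of_lang_eq (hφS.trans hαS.symm)]

/-- for every set `S` of variables, the set of answered queries
with smallest language `S` is jointly satisfiable (hence does not entail ⊥);
in particular, for no γ do both `σ ⊢_k γ` and `σ ⊢_k ¬γ` hold. -/
theorem answers_fixed_lang_consistent {ν : Type} (S : Set ν)
    (σ : List (PropForm ν)) (k : ℕ) :
    Satisfiable ({α : PropForm ν | Lang α = S} ∩ Ck σ k) ∧
    ¬ Entails ({α : PropForm ν | Lang α = S} ∩ Ck σ k) PropForm.fls ∧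
    ∀ γ : PropForm ν, ¬ (InferK σ k γ ∧ InferK σ k (PropForm.neg γ)) := by
  refine ⟨satisfiable_lang_eq_inter_Ck S σ k,
    (satisfiable_lang_eq_inter_Ck S σ k).not_entails_fls, ?_⟩
  rintro γ ⟨hγ, hnegγ⟩
  obtain ⟨v, hv⟩ := satisfiable_lang_eq_inter_Ck (Lang γ) σ k
  have hγv := hv γ ⟨rfl, hγ⟩
  have hnegγv := hv _ ⟨lang_neg γ, hnegγ⟩
  simp [PropForm.eval, hγv] at hnegγv

end BeliefSeq
end

section
/- Weak Inclusion: if γ is a satisfiable formula (γ is not a contradiction), then for every belief sequence σ and every level k, σ * γ ⊢_k γ, i.e., after revising σ by γ the query γ is answered affirmatively. -/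
namespace BeliefSeq

variable {ν : Type}

/-!
If `γ` is a tautology there is nothing to prove. Otherwise `γ` is contingent, so some single
variable flip changes its value; that variable lies in every language expressing `γ`, hence
`L_γ ≠ ∅` and `rel(γ, γ, σ * γ) = 0`. The appended `γ` is then the most relevant and most recent
entry of `σ * γ`, so it heads the prioritized list, and being satisfiable it is the first formula
put into `Γ_{σ*γ,k,γ}`.
-/

namespace PropForm

lemma eval_congr {φ : PropForm ν} {v w : ν → Bool} (h : ∀ x ∈ φ.vars, v x = w x) :
    φ.eval v = φ.eval w := by
  induction φ with
  | var x => exact h x rfl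
  | tru | fls => rfl
  | neg φ ih => simp only [eval, ih h]
  | conj φ ψ ih₁ ih₂ | disj φ ψ ih₁ ih₂ | impl φ ψ ih₁ ih₂ | biim φ ψ ih₁ ih₂ =>
    simp only [eval, ih₁ fun x hx => h x (Or.inl hx), ih₂ fun x hx => h x (Or.inr hx)]

lemma finite_vars (φ : PropForm ν) : φ.vars.Finite := by
  induction φ with
  | var x => exact Set.finite_singleton x
  | tru | fls => exact Set.finite_empty
  | neg φ ih => exact ih
  | conj _ _ ih₁ ih₂ | disj _ _ ih₁ ih₂ | impl _ _ ih₁ ih₂ | biim _ _ ih₁ ih₂ =>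
    exact ih₁.union ih₂

lemma eval_eq_of_forall_eval_update_eq [DecidableEq ν] {φ : PropForm ν}
    (h : ∀ v x b, φ.eval (Function.update v x b) = φ.eval v) (v w : ν → Bool) :
    φ.eval v = φ.eval w := by
  have hpiecewise : ∀ S : Finset ν, φ.eval (S.piecewise w v) = φ.eval v := by
    intro S
    induction S using Finset.induction_on with
    | empty => rw [Finset.piecewise_empty]
    | insert a S _ ih => rw [Finset.piecewise_insert, h, ih]
  rw [← hpiecewise (finite_vars φ).toFinset]
  exact eval_congr fun x hx =>
    Finset.piecewise_eq_of_mem _ _ _ ((finite_vars φ).mem_toFinset.2 hx)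

end PropForm

open PropForm

lemma mem_lang_of_eval_update_ne [DecidableEq ν] {γ : PropForm ν} {v : ν → Bool} {x : ν}
    {b : Bool} (h : γ.eval (Function.update v x b) ≠ γ.eval v) : x ∈ Lang γ := by
  refine Set.mem_sInter.2 fun V ⟨β, hγβ, hβV⟩ => by_contra fun hx => h ?_
  rw [hγβ, hγβ]
  exact eval_congr fun y hy =>
    Function.update_of_ne (fun (hyx : y = x) => hx (hyx ▸ hβV hy)) _ _

lemma lang_nonempty {γ : PropForm ν} (hnt : ¬ Tautology γ) (hnc : ¬ Contradiction γ) :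
    (Lang γ).Nonempty := by
  classical
  by_contra hempty
  have hconst : ∀ v x b, γ.eval (Function.update v x b) = γ.eval v := fun _ x _ =>
    by_contra fun hne => hempty ⟨x, mem_lang_of_eval_update_ne hne⟩
  obtain ⟨v, hv⟩ := not_forall.1 hnt
  obtain ⟨w, hw⟩ := not_forall.1 hnc
  rw [Bool.not_eq_true] at hv
  rw [Bool.not_eq_false] at hw
  simpa [hv, hw] using eval_eq_of_forall_eval_update_eq hconst v w

lemma relDeg_self_eq_zero {γ : PropForm ν} (h : (Lang γ).Nonempty) (σ : List (PropForm ν)) :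
    relDeg γ γ σ = 0 :=
  nonpos_iff_eq_zero.1 <| sInf_le
    ⟨0, rfl, [], rfl, by simp, List.isChain_pair.2 (by rwa [DirectRel, Set.inter_self])⟩

section Priority

variable (γ : PropForm ν) (σ : List (PropForm ν))

lemma priority_trans (a b c : ℕ × PropForm ν) (hab : priority γ σ a b = true)
    (hbc : priority γ σ b c = true) : priority γ σ a c = true := by
  simp only [priority, decide_eq_true_iff] at *
  rcases hab with hab | ⟨hab, hab'⟩ <;> rcases hbc with hbc | ⟨hbc, hbc'⟩
  · exact Or.inl (hab.trans hbc)
  · exact Or.inl (hbc ▸ hab)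
  · exact Or.inl (hab ▸ hbc)
  · exact Or.inr ⟨hab.trans hbc, hbc'.trans hab'⟩

lemma priority_total (a b : ℕ × PropForm ν) :
    (priority γ σ a b || priority γ σ b a) = true := by
  simp only [priority, Bool.or_eq_true, decide_eq_true_iff]
  rcases lt_trichotomy (relDeg γ a.2 σ) (relDeg γ b.2 σ) with h | h | h
  · exact Or.inl (Or.inl h)
  · rcases le_total a.1 b.1 with h' | h'
    · exact Or.inr (Or.inr ⟨h.symm, h'⟩)
    · exact Or.inl (Or.inr ⟨h, h'⟩)
  · exact Or.inr (Or.inl h)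

end Priority

lemma _root_.List.exists_eq_cons_of_pairwise {α : Type*} {r : α → α → Prop} {l : List α}
    (hl : l.Pairwise r) {a : α} (ha : a ∈ l) (hmin : ∀ b ∈ l, r b a → b = a) :
    ∃ rest, l = a :: rest := by
  cases l with
  | nil => simp at ha
  | cons b rest =>
    refine ⟨rest, ?_⟩
    obtain rfl | ha := List.mem_cons.1 ha
    · rfl
    · rw [hmin b List.mem_cons_self (List.rel_of_pairwise_cons hl ha)]

lemma _root_.List.eq_of_mem_zipIdx_append_singleton {α : Type*} {l : List α} {a : α}
    {b : ℕ × α} (hb : b ∈ (l ++ [a]).zipIdx.map Prod.swap) (hle : l.length ≤ b.1) :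
    b = (l.length, a) := by
  obtain ⟨⟨x, i⟩, hmem, rfl⟩ := List.mem_map.1 hb
  rw [List.zipIdx_append, List.zipIdx_singleton, List.mem_append] at hmem
  rcases hmem with hmem | hmem
  · have := (List.mem_zipIdx hmem).2.1
    simp only [Prod.swap] at hle
    omega
  · simp_all

lemma prioritized_revise_eq_cons {γ : PropForm ν} {σ : List (PropForm ν)}
    (h : relDeg γ γ (revise σ γ) = 0) : ∃ rest, prioritized γ (revise σ γ) = γ :: rest := by
  set σ' := revise σ γ
  have hperm := List.mergeSort_perm (σ'.zipIdx.map Prod.swap) (priority γ σ')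
  have hmem : (σ.length, γ) ∈ σ'.zipIdx.map Prod.swap := by
    simp [σ', revise, List.zipIdx_append]
  obtain ⟨rest, hrest⟩ := List.exists_eq_cons_of_pairwise
    (List.pairwise_mergeSort (priority_trans γ σ') (priority_total γ σ') _)
    (hperm.mem_iff.2 hmem) fun b hb hprio => by
      simp only [priority, h, not_lt_zero, false_or, decide_eq_true_iff] at hprio
      exact List.eq_of_mem_zipIdx_append_singleton (hperm.mem_iff.1 hb) hprio.2
  exact ⟨rest.map Prod.snd, by rw [prioritized, hrest, List.map_cons]⟩

lemma _root_.List.le_foldl_of_inflationary {α β : Type*} [Preorder α] {f : α → β → α}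
    (hf : ∀ a b, a ≤ f a b) : ∀ (l : List β) (a : α), a ≤ l.foldl f a
  | [], _ => le_rfl
  | b :: l, a => (hf a b).trans (List.le_foldl_of_inflationary hf l _)

lemma mem_gamma_of_prioritized_eq_cons {σ : List (PropForm ν)} {k : ℕ} {γ δ : PropForm ν}
    {rest : List (PropForm ν)} (hδ : prioritized γ σ = δ :: rest) (hsat : ¬ Contradiction δ)
    (hrel : relDeg γ δ σ ≤ k) : δ ∈ Gamma σ k γ := by
  rw [Gamma, hδ, List.foldl_cons, if_neg]
  · refine Set.mem_of_subset_of_mem (List.le_foldl_of_inflationary (fun Γ d => ?_) rest _)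
      (Set.mem_insert δ ∅)
    split_ifs
    exacts [le_rfl, Set.subset_insert d Γ]
  · rintro (hneg | hlt)
    · exact hsat fun v => by simpa [eval] using hneg v (by simp)
    · exact hlt.not_ge hrel

/-- Weak Inclusion: if γ is satisfiable (not a contradiction),
then for every σ and k, `σ * γ ⊢_k γ`. -/
theorem weak_inclusion {ν : Type} (γ : PropForm ν)
    (h : ¬ Contradiction γ) (σ : List (PropForm ν)) (k : ℕ) :
    InferK (revise σ γ) k γ := by
  by_cases htaut : Tautology γ
  · exact fun v _ => htaut v
  have hrel := relDeg_self_eq_zero (lang_nonempty htaut h) (revise σ γ)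
  obtain ⟨rest, hrest⟩ := prioritized_revise_eq_cons hrel
  exact fun v hv => hv γ (mem_gamma_of_prioritized_eq_cons hrest h (hrel.trans_le zero_le))

end BeliefSeq
end
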